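/- arXiv:1911.07421 — 3 statements merged into one kernel-verified Lean document; each statement's English description precedes it below -/
import Mathlib

section
/- The optimal GAN discriminator between two densities is their normalized ratio: for all measurable D : Z → (0,1), ∫ p(z)·log D(z) dμ(z) + ∫ q(z)·log(1 − D(z)) dμ(z) ≤ ∫ p(z)·log D*(z) dμ(z) + ∫ q(z)·log(1 − D*(z)) dμ(z), where D*(z) = p(z)/(p(z)+q(z)). (This is the fact used to estimate the aggregate posterior: after training the latent discriminator D_z optimally against the prior p(z) and the encoder marginal q(z), one has D_z = p(z)/(p(z)+q(z)).) -/
/-!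
For fixed `a, b ≥ 0` the function `t ↦ a log t + b log (1 - t)` on `(0, 1)` is maximised at
`t = a / (a + b)`: by `log x ≤ x - 1`, each term satisfies
`a log t ≤ a log (a / s) + (t s - a)` for `s = a + b`, and the two error terms cancel.
Applying this at every point `z` with `a = p z`, `b = q z`, `t = D z` and integrating gives the
theorem.
-/

open MeasureTheory Real

lemma mul_log_le_mul_log_div_add_sub {a s t : ℝ} (ha : 0 ≤ a) (has : a ≤ s) (ht : 0 < t) :
    a * log t ≤ a * log (a / s) + (t * s - a) := by
  rcases ha.eq_or_lt with rfl | ha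
  · simpa using mul_nonneg ht.le has
  have hs : 0 < s := ha.trans_le has
  have hgibbs : log (t / (a / s)) ≤ t / (a / s) - 1 :=
    log_le_sub_one_of_pos (by positivity)
  rw [log_div ht.ne' (by positivity)] at hgibbs
  calc a * log t = a * log (a / s) + a * (log t - log (a / s)) := by ring
    _ ≤ a * log (a / s) + a * (t / (a / s) - 1) := by gcongr
    _ = a * log (a / s) + (t * s - a) := by field_simp

lemma mul_log_add_mul_log_one_sub_le {a b t : ℝ} (ha : 0 ≤ a) (hb : 0 ≤ b)
    (ht₀ : 0 < t) (ht₁ : t < 1) :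
    a * log t + b * log (1 - t) ≤ a * log (a / (a + b)) + b * log (b / (a + b)) := by
  have hpos := mul_log_le_mul_log_div_add_sub ha (le_add_of_nonneg_right hb) ht₀
  have hneg := mul_log_le_mul_log_div_add_sub hb (le_add_of_nonneg_left ha) (sub_pos.2 ht₁)
  linear_combination hpos + hneg

theorem optimal_gan_discriminator_general
    {Z : Type*} [MeasurableSpace Z] (μ : Measure Z)
    (p q : Z → ℝ)
    (hp_nonneg : ∀ z, 0 ≤ p z) (hq_nonneg : ∀ z, 0 ≤ q z)
    (D : Z → ℝ)
    (hD_range : ∀ z, D z ∈ Set.Ioo (0 : ℝ) 1)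
    (h_int_pD : Integrable (fun z => p z * Real.log (D z)) μ)
    (h_int_qD : Integrable (fun z => q z * Real.log (1 - D z)) μ)
    (h_int_pstar : Integrable (fun z => p z * Real.log (p z / (p z + q z))) μ)
    (h_int_qstar : Integrable (fun z => q z * Real.log (q z / (p z + q z))) μ) :
    ∫ z, p z * Real.log (D z) ∂μ + ∫ z, q z * Real.log (1 - D z) ∂μ ≤
      ∫ z, p z * Real.log (p z / (p z + q z)) ∂μ +
        ∫ z, q z * Real.log (q z / (p z + q z)) ∂μ := by
  rw [← integral_add h_int_pD h_int_qD, ← integral_add h_int_pstar h_int_qstar]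
  exact integral_mono (h_int_pD.add h_int_qD) (h_int_pstar.add h_int_qstar) fun z =>
    mul_log_add_mul_log_one_sub_le (hp_nonneg z) (hq_nonneg z) (hD_range z).1 (hD_range z).2

/-- **The optimal GAN discriminator between two densities is their normalized
ratio**: for probability densities `p, q` w.r.t. `μ` with `p + q > 0` μ-a.e., and
every measurable discriminator `D : Z → (0,1)`,
`∫ p·log D dμ + ∫ q·log(1-D) dμ ≤ ∫ p·log D* dμ + ∫ q·log(1-D*) dμ`
where `D*(z) = p(z)/(p(z)+q(z))` (so `1 - D*(z) = q(z)/(p(z)+q(z))`). -/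
theorem optimal_gan_discriminator
    {Z : Type*} [MeasurableSpace Z] (μ : Measure Z) [SigmaFinite μ]
    (p q : Z → ℝ) (hp_meas : Measurable p) (hq_meas : Measurable q)
    (hp_nonneg : ∀ z, 0 ≤ p z) (hq_nonneg : ∀ z, 0 ≤ q z)
    (hp_prob : ∫ z, p z ∂μ = 1) (hq_prob : ∫ z, q z ∂μ = 1)
    (h_pos : ∀ᵐ z ∂μ, 0 < p z + q z)
    (D : Z → ℝ) (hD_meas : Measurable D)
    (hD_range : ∀ z, D z ∈ Set.Ioo (0 : ℝ) 1)
    (h_int_pD : Integrable (fun z => p z * Real.log (D z)) μ)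
    (h_int_qD : Integrable (fun z => q z * Real.log (1 - D z)) μ)
    (h_int_pstar : Integrable (fun z => p z * Real.log (p z / (p z + q z))) μ)
    (h_int_qstar : Integrable (fun z => q z * Real.log (q z / (p z + q z))) μ) :
    ∫ z, p z * Real.log (D z) ∂μ + ∫ z, q z * Real.log (1 - D z) ∂μ ≤
      ∫ z, p z * Real.log (p z / (p z + q z)) ∂μ +
        ∫ z, q z * Real.log (q z / (p z + q z)) ∂μ :=
  optimal_gan_discriminator_general μ p q hp_nonneg hq_nonneg D hD_range h_int_pD h_int_qD
    h_int_pstar h_int_qstar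
end

section
/- The value of the GAN objective at the optimal discriminator D*(z) = p(z)/(p(z)+q(z)) equals ∫ p(z)·log D*(z) dμ(z) + ∫ q(z)·log(1 − D*(z)) dμ(z) = KL(P ‖ M) + KL(Q ‖ M) − log 4, where P = p·μ, Q = q·μ, and M = ½(P + Q) is the mixture. (Equivalently, the supremum of the discriminator objective equals 2·JSD(P,Q) − log 4.) -/
open MeasureTheory
open scoped ENNReal

/-!
The mixture `M = ½(P + Q)` has density `(p + q)/2`, so `dP/dM = 2p/(p + q) = 2 D*` and
`KL(P‖M) = ∫ p log D* dμ + log 2`; symmetrically `KL(Q‖M) = ∫ q log(1 - D*) dμ + log 2`.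
All these integrals exist because `|p log D*| ≤ q` pointwise.
-/

/-- Kullback–Leibler divergence between two measures, as the expected
log-likelihood ratio (meaningful under absolute continuity and integrability;
here each measure is absolutely continuous w.r.t. the mixture `M`). -/
noncomputable def klDiv {α : Type*} [MeasurableSpace α] (ν ρ : Measure α) : ℝ :=
  ∫ x, llr ν ρ x ∂ν

open Real

lemma abs_mul_log_div_add_le {r s : ℝ} (hr : 0 ≤ r) (hs : 0 ≤ s) :
    |r * log (r / (r + s))| ≤ s := by
  rcases hr.eq_or_lt with rfl | hr
  · simpa using hs
  have hrs : 0 < r + s := by linarith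
  rw [abs_le]
  constructor
  · have h := one_sub_inv_le_log_of_pos (div_pos hr hrs)
    rw [inv_div, one_sub_div hr.ne', sub_add_cancel_left] at h
    have := mul_le_mul_of_nonneg_left h hr.le
    rwa [mul_div_cancel₀ _ hr.ne'] at this
  · have : log (r / (r + s)) ≤ 0 :=
      log_nonpos (by positivity) ((div_le_one hrs).2 (by linarith))
    nlinarith

lemma mul_log_div_half_add {r s : ℝ} (hr : 0 ≤ r) (hs : 0 ≤ s) :
    r * log (r / ((r + s) / 2)) = r * log (r / (r + s)) + r * log 2 := by
  rcases hr.eq_or_lt with rfl | hr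
  · simp
  rw [div_div_eq_mul_div, mul_comm r 2, mul_div_assoc,
    log_mul two_ne_zero (div_pos hr (by linarith)).ne']
  ring

section

variable {Z : Type*} [MeasurableSpace Z] {μ : Measure Z}

lemma integrable_mul_log_div_add {r s : Z → ℝ} (hr : Measurable r) (hs : Measurable s)
    (hr0 : ∀ z, 0 ≤ r z) (hs0 : ∀ z, 0 ≤ s z) (hs_int : Integrable s μ) :
    Integrable (fun z => r z * log (r z / (r z + s z))) μ :=
  hs_int.mono' (by fun_prop) <| ae_of_all _ fun z => abs_mul_log_div_add_le (hr0 z) (hs0 z)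

lemma withDensity_ofReal_mixture {p q : Z → ℝ} (hp : Measurable p)
    (hp0 : ∀ z, 0 ≤ p z) (hq0 : ∀ z, 0 ≤ q z) :
    (2 : ℝ≥0∞)⁻¹ • (μ.withDensity (fun z => ENNReal.ofReal (p z)) +
        μ.withDensity (fun z => ENNReal.ofReal (q z))) =
      μ.withDensity fun z => ENNReal.ofReal ((p z + q z) / 2) := by
  rw [← withDensity_add_left hp.ennreal_ofReal, ← withDensity_smul' _ _ (by simp)]
  congr 1
  funext z
  rw [Pi.smul_apply, Pi.add_apply, ← ENNReal.ofReal_add (hp0 z) (hq0 z), div_eq_mul_inv,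
    ENNReal.ofReal_mul (add_nonneg (hp0 z) (hq0 z)), ENNReal.ofReal_inv_of_pos two_pos,
    smul_eq_mul, mul_comm]
  norm_num

lemma klDiv_withDensity_ofReal [SigmaFinite μ] {r w : Z → ℝ} (hr : Measurable r)
    (hw : Measurable w) (hr0 : ∀ z, 0 ≤ r z) (hw_pos : ∀ᵐ z ∂μ, 0 < w z) :
    klDiv (μ.withDensity fun z => ENNReal.ofReal (r z))
        (μ.withDensity fun z => ENNReal.ofReal (w z)) =
      ∫ z, r z * log (r z / w z) ∂μ := by
  have : SigmaFinite (μ.withDensity fun z => ENNReal.ofReal (r z)) :=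
    SigmaFinite.withDensity_of_ne_top (ae_of_all _ fun _ => ENNReal.ofReal_ne_top)
  have h_rnDeriv : (μ.withDensity fun z => ENNReal.ofReal (r z)).rnDeriv
      (μ.withDensity fun z => ENNReal.ofReal (w z)) =ᵐ[μ]
        fun z => ENNReal.ofReal (r z / w z) := by
    have h_ne_zero : ∀ᵐ z ∂μ, ENNReal.ofReal (w z) ≠ 0 := by
      filter_upwards [hw_pos] with z hz using ENNReal.ofReal_pos.2 hz |>.ne'
    filter_upwards [Measure.rnDeriv_withDensity_right
      (μ.withDensity fun z => ENNReal.ofReal (r z)) μ hw.ennreal_ofReal.aemeasurable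
      h_ne_zero (ae_of_all _ fun _ => ENNReal.ofReal_ne_top),
      Measure.rnDeriv_withDensity μ hr.ennreal_ofReal, hw_pos] with z h_right h_left hz
    rw [h_right, h_left, ← ENNReal.ofReal_inv_of_pos hz,
      ← ENNReal.ofReal_mul (inv_nonneg.2 hz.le), inv_mul_eq_div]
  rw [klDiv, integral_withDensity_eq_integral_toReal_smul hr.ennreal_ofReal
    (ae_of_all _ fun _ => ENNReal.ofReal_lt_top)]
  refine integral_congr_ae ?_
  filter_upwards [h_rnDeriv, hw_pos] with z hz hwz
  simp [llr, hz, hr0 z, div_nonneg (hr0 z) hwz.le]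

lemma klDiv_withDensity_ofReal_mixture [SigmaFinite μ] {p q : Z → ℝ} (hp : Measurable p)
    (hq : Measurable q) (hp0 : ∀ z, 0 ≤ p z) (hq0 : ∀ z, 0 ≤ q z) (hp_prob : ∫ z, p z ∂μ = 1)
    (hq_int : Integrable q μ) (h_pos : ∀ᵐ z ∂μ, 0 < p z + q z) :
    klDiv (μ.withDensity fun z => ENNReal.ofReal (p z))
        (μ.withDensity fun z => ENNReal.ofReal ((p z + q z) / 2)) =
      ∫ z, p z * log (p z / (p z + q z)) ∂μ + log 2 := by
  have hp_int : Integrable p μ := .of_integral_ne_zero (by simp [hp_prob])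
  rw [klDiv_withDensity_ofReal hp (by fun_prop) hp0 (by simpa using h_pos)]
  simp_rw [mul_log_div_half_add (hp0 _) (hq0 _)]
  rw [integral_add (integrable_mul_log_div_add hp hq hp0 hq0 hq_int) (hp_int.mul_const _),
    integral_mul_const, hp_prob, one_mul]

end

theorem gan_value_at_optimal_discriminator_general
    {Z : Type*} [MeasurableSpace Z] (μ : Measure Z) [SigmaFinite μ]
    (p q : Z → ℝ) (hp_meas : Measurable p) (hq_meas : Measurable q)
    (hp_nonneg : ∀ z, 0 ≤ p z) (hq_nonneg : ∀ z, 0 ≤ q z)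
    (hp_prob : ∫ z, p z ∂μ = 1) (hq_prob : ∫ z, q z ∂μ = 1)
    (h_pos : ∀ᵐ z ∂μ, 0 < p z + q z) :
    ∫ z, p z * Real.log (p z / (p z + q z)) ∂μ +
        ∫ z, q z * Real.log (q z / (p z + q z)) ∂μ =
      klDiv (μ.withDensity fun z => ENNReal.ofReal (p z))
          ((2 : ENNReal)⁻¹ • (μ.withDensity (fun z => ENNReal.ofReal (p z)) +
            μ.withDensity (fun z => ENNReal.ofReal (q z)))) +
        klDiv (μ.withDensity fun z => ENNReal.ofReal (q z))
          ((2 : ENNReal)⁻¹ • (μ.withDensity (fun z => ENNReal.ofReal (p z)) +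
            μ.withDensity (fun z => ENNReal.ofReal (q z)))) -
        Real.log 4 := by
  have hp_int : Integrable p μ := .of_integral_ne_zero (by simp [hp_prob])
  have hq_int : Integrable q μ := .of_integral_ne_zero (by simp [hq_prob])
  have hKL_P := klDiv_withDensity_ofReal_mixture hp_meas hq_meas hp_nonneg hq_nonneg hp_prob
    hq_int h_pos
  have hKL_Q := klDiv_withDensity_ofReal_mixture hq_meas hp_meas hq_nonneg hp_nonneg hq_prob
    hp_int (by simpa only [add_comm] using h_pos)
  simp only [add_comm (q _)] at hKL_Q
  have hlog4 : log 4 = 2 * log 2 := by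
    rw [show (4 : ℝ) = 2 ^ 2 by norm_num, log_pow, Nat.cast_ofNat]
  rw [withDensity_ofReal_mixture hp_meas hp_nonneg hq_nonneg, hKL_P, hKL_Q, hlog4]
  ring

/-- **Value of the GAN objective at the optimal discriminator**
`D*(z) = p(z)/(p(z)+q(z))`:
`∫ p·log D* dμ + ∫ q·log(1-D*) dμ = KL(P‖M) + KL(Q‖M) - log 4`,
where `P = p·μ`, `Q = q·μ` and `M = ½(P+Q)` (equivalently, the supremum of the
discriminator objective equals `2·JSD(P,Q) - log 4`). -/
theorem gan_value_at_optimal_discriminator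
    {Z : Type*} [MeasurableSpace Z] (μ : Measure Z) [SigmaFinite μ]
    (p q : Z → ℝ) (hp_meas : Measurable p) (hq_meas : Measurable q)
    (hp_nonneg : ∀ z, 0 ≤ p z) (hq_nonneg : ∀ z, 0 ≤ q z)
    (hp_prob : ∫ z, p z ∂μ = 1) (hq_prob : ∫ z, q z ∂μ = 1)
    (h_pos : ∀ᵐ z ∂μ, 0 < p z + q z)
    (h_int_pstar : Integrable (fun z => p z * Real.log (p z / (p z + q z))) μ)
    (h_int_qstar : Integrable (fun z => q z * Real.log (q z / (p z + q z))) μ) :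
    ∫ z, p z * Real.log (p z / (p z + q z)) ∂μ +
        ∫ z, q z * Real.log (q z / (p z + q z)) ∂μ =
      klDiv (μ.withDensity fun z => ENNReal.ofReal (p z))
          ((2 : ENNReal)⁻¹ • (μ.withDensity (fun z => ENNReal.ofReal (p z)) +
            μ.withDensity (fun z => ENNReal.ofReal (q z)))) +
        klDiv (μ.withDensity fun z => ENNReal.ofReal (q z))
          ((2 : ENNReal)⁻¹ • (μ.withDensity (fun z => ENNReal.ofReal (p z)) +
            μ.withDensity (fun z => ENNReal.ofReal (q z)))) -
        Real.log 4 :=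
  gan_value_at_optimal_discriminator_general μ p q hp_meas hq_meas hp_nonneg hq_nonneg hp_prob
    hq_prob h_pos
end

section
/- The Deep Infomax estimator is a variational lower bound of the (Jensen–Shannon version of) divergence: for every bounded measurable function T : W → ℝ, E_P[ −softplus(−T) ] − E_Q[ softplus(T) ] ≤ KL(P ‖ M) + KL(Q ‖ M) − log 4, where M = ½(P + Q). (This justifies training the statistics network T to maximize the estimator Î in order to obtain a lower-bound estimate of the JS-version mutual information.) -/
/-!
Put `M = ½(P + Q)` and `σ = (1 + exp (-T))⁻¹`, so that `-softplus (-T) = log σ` and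
`-softplus T = log (1 - σ)`. The Donsker–Varadhan inequality bounds `E_P[log σ]` by
`KL(P‖M) + log a` and `E_Q[log (1 - σ)]` by `KL(Q‖M) + log (1 - a)`, where `a = E_M[σ]`,
and `a (1 - a) ≤ 1/4`. Both divergences are finite because `P, Q ≤ 2 M`.
-/

open MeasureTheory

/-- The softplus function `softplus t = log(1 + exp t)`. -/
noncomputable def softplus (t : ℝ) : ℝ := Real.log (1 + Real.exp t)

open Real

section LogLikelihoodRatio

variable {α : Type*} {mα : MeasurableSpace α} {μ ν : Measure α}

lemma MeasureTheory.Measure.rnDeriv_le_of_le_smul [SigmaFinite ν] {c : ENNReal} (h : μ ≤ c • ν) :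
    μ.rnDeriv ν ≤ᵐ[ν] fun _ ↦ c := by
  refine ae_le_of_forall_setLIntegral_le_of_sigmaFinite (μ.measurable_rnDeriv ν) fun s _ _ ↦ ?_
  rw [setLIntegral_const]
  exact (Measure.setLIntegral_rnDeriv_le s).trans (h s)

lemma integrable_llr_of_le_smul [IsFiniteMeasure μ] [IsFiniteMeasure ν] {c : ENNReal}
    (hc : c ≠ ⊤) (h : μ ≤ c • ν) : Integrable (llr μ ν) μ := by
  rw [← integrable_rnDeriv_mul_log_iff (Measure.absolutelyContinuous_of_le_smul h)]
  obtain ⟨C, hC⟩ := isCompact_Icc.exists_bound_of_continuousOn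
    (continuous_mul_log.continuousOn (s := Set.Icc 0 c.toReal))
  refine Integrable.of_bound (by fun_prop) C ?_
  filter_upwards [Measure.rnDeriv_le_of_le_smul h] with x hx
  exact hC _ ⟨ENNReal.toReal_nonneg, ENNReal.toReal_mono hc hx⟩

/-- Donsker–Varadhan: Gibbs' inequality for `μ` against the tilted measure `ν.tilted f`. -/
lemma integral_le_integral_llr_add_log_integral_exp [IsProbabilityMeasure μ] [IsFiniteMeasure ν]
    {f : α → ℝ} (hμν : μ ≪ ν) (hfμ : Integrable f μ) (hfν : Integrable (fun x ↦ exp (f x)) ν)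
    (h_int : Integrable (llr μ ν) μ) :
    ∫ x, f x ∂μ ≤ ∫ x, llr μ ν x ∂μ + log (∫ x, exp (f x) ∂ν) := by
  have : NeZero ν := ⟨fun h ↦ by simpa using hμν (s := Set.univ) (by simp [h])⟩
  have := isProbabilityMeasure_tilted hfν
  have hgibbs := InformationTheory.integral_llr_add_sub_measure_univ_nonneg
    (hμν.trans (absolutelyContinuous_tilted hfν)) (integrable_llr_tilted_right hμν hfμ h_int hfν)
  rw [integral_llr_tilted_right hμν hfμ hfν h_int] at hgibbs
  simp only [probReal_univ] at hgibbs
  linarith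

end LogLikelihoodRatio

section Softplus

lemma softplus_nonneg (t : ℝ) : 0 ≤ softplus t :=
  log_nonneg (by linarith [exp_pos t])

lemma softplus_mono : Monotone softplus := fun _ _ h ↦
  log_le_log (by positivity) (by gcongr)

lemma continuous_softplus : Continuous softplus :=
  (continuous_const.add continuous_exp).log fun t ↦ (add_pos one_pos (exp_pos t)).ne'

lemma exp_neg_softplus (t : ℝ) : exp (-softplus t) = (1 + exp t)⁻¹ := by
  rw [softplus, exp_neg, exp_log (by positivity)]

lemma exp_neg_softplus_add_exp_neg_softplus_neg (t : ℝ) :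
    exp (-softplus t) + exp (-softplus (-t)) = 1 := by
  rw [exp_neg_softplus, exp_neg_softplus, exp_neg]
  field_simp
  ring

variable {α : Type*} {mα : MeasurableSpace α} {μ : Measure α} [IsFiniteMeasure μ] {T : α → ℝ}

lemma integrable_softplus_comp (hT : Measurable T) {C : ℝ} (hC : ∀ x, T x ≤ C) :
    Integrable (fun x ↦ softplus (T x)) μ :=
  Integrable.of_bound (continuous_softplus.measurable.comp hT).aestronglyMeasurable (softplus C)
    (ae_of_all _ fun x ↦ by
      rw [norm_of_nonneg (softplus_nonneg _)]
      exact softplus_mono (hC x))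

lemma integrable_exp_neg_softplus_comp (hT : Measurable T) :
    Integrable (fun x ↦ exp (-softplus (T x))) μ :=
  Integrable.of_bound (continuous_softplus.measurable.comp hT).neg.exp.aestronglyMeasurable 1
    (ae_of_all _ fun x ↦ by
      rw [norm_of_nonneg (exp_pos _).le, exp_le_one_iff, neg_nonpos]
      exact softplus_nonneg _)

end Softplus

lemma log_add_log_le_neg_log_four {a b : ℝ} (ha : 0 < a) (hb : 0 < b) (hab : a + b = 1) :
    log a + log b ≤ -log 4 := by
  rw [← log_mul ha.ne' hb.ne', ← log_inv]
  exact log_le_log (by positivity) (by nlinarith [sq_nonneg (a - b)])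

section Mixture

variable {α : Type*} {mα : MeasurableSpace α}

lemma le_two_smul_half_add (P Q : Measure α) :
    P ≤ (2 : ENNReal) • ((2 : ENNReal)⁻¹ • (P + Q)) := by
  rw [smul_smul, ENNReal.mul_inv_cancel two_ne_zero ENNReal.ofNat_ne_top, one_smul]
  exact Measure.le_add_right le_rfl

instance isProbabilityMeasure_half_add (P Q : Measure α) [IsProbabilityMeasure P]
    [IsProbabilityMeasure Q] : IsProbabilityMeasure ((2 : ENNReal)⁻¹ • (P + Q)) :=
  ⟨by simp [ENNReal.inv_two_add_inv_two]⟩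

end Mixture

/-- **The Deep Infomax estimator is a variational lower bound of the
Jensen–Shannon version of the divergence**: for every bounded measurable
`T : W → ℝ`,
`E_P[-softplus(-T)] - E_Q[softplus T] ≤ KL(P‖M) + KL(Q‖M) - log 4`,
where `M = ½(P+Q)`. -/
theorem deep_infomax_lower_bound
    {W : Type*} [MeasurableSpace W] (P Q : Measure W)
    [IsProbabilityMeasure P] [IsProbabilityMeasure Q]
    (T : W → ℝ) (hT_meas : Measurable T) (hT_bdd : ∃ C : ℝ, ∀ x, |T x| ≤ C) :
    ∫ x, -softplus (-T x) ∂P - ∫ x, softplus (T x) ∂Q ≤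
      klDiv P ((2 : ENNReal)⁻¹ • (P + Q)) +
        klDiv Q ((2 : ENNReal)⁻¹ • (P + Q)) - Real.log 4 := by
  obtain ⟨C, hC⟩ := hT_bdd
  set M : Measure W := (2 : ENNReal)⁻¹ • (P + Q)
  have hPM : P ≤ (2 : ENNReal) • M := le_two_smul_half_add P Q
  have hQM : Q ≤ (2 : ENNReal) • M := by
    simpa only [add_comm Q P] using le_two_smul_half_add Q P
  have hT_meas' : Measurable fun x ↦ -T x := hT_meas.neg
  have hP := integral_le_integral_llr_add_log_integral_exp (f := fun x ↦ -softplus (-T x))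
    (Measure.absolutelyContinuous_of_le_smul hPM)
    (integrable_softplus_comp hT_meas' fun x ↦ neg_le.1 (abs_le.1 (hC x)).1).neg
    (integrable_exp_neg_softplus_comp hT_meas') (integrable_llr_of_le_smul (by simp) hPM)
  have hQ := integral_le_integral_llr_add_log_integral_exp (f := fun x ↦ -softplus (T x))
    (Measure.absolutelyContinuous_of_le_smul hQM)
    (integrable_softplus_comp hT_meas fun x ↦ (abs_le.1 (hC x)).2).neg
    (integrable_exp_neg_softplus_comp hT_meas) (integrable_llr_of_le_smul (by simp) hQM)
  have hsum : ∫ x, exp (-softplus (-T x)) ∂M + ∫ x, exp (-softplus (T x)) ∂M = 1 := by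
    rw [← integral_add (integrable_exp_neg_softplus_comp hT_meas')
      (integrable_exp_neg_softplus_comp hT_meas)]
    simp [add_comm, exp_neg_softplus_add_exp_neg_softplus_neg]
  have hlog := log_add_log_le_neg_log_four (integral_exp_pos (integrable_exp_neg_softplus_comp
    hT_meas')) (integral_exp_pos (integrable_exp_neg_softplus_comp hT_meas)) hsum
  rw [integral_neg] at hQ
  unfold klDiv
  linarith
end
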